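/- arXiv:1504.06299 — 3 statements merged into one kernel-verified Lean document; each statement's English description precedes it below -/
import Mathlib

section
/- Let k be an algebraically closed field, G a finite abelian group with char(k) ∤ |G| acting on a k-algebra A by k-algebra automorphisms, with a fixed isomorphism G ≅ G^∨, g ↦ χ_g, and let μ be a normalised 2-cocycle of G with values in kˣ. Then the cocycle twist A^{G,μ} is isomorphic as a k-algebra to the invariant ring (AG_μ)^G of the twisted group algebra AG_μ under the diagonal G-action. -/
universe u v

/-- A normalised 2-cocycle of the group `G` with values in `kˣ`. -/
def IsCocycle {G : Type*} [Group G] {k : Type*} [Field k] (μ : G → G → kˣ) : Prop :=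
  (∀ g h l : G, μ g h * μ (g * h) l = μ g (h * l) * μ h l) ∧
    (∀ g : G, μ 1 g = 1) ∧ (∀ g : G, μ g 1 = 1)

/-- The isotypic component of the `k`-algebra `A`, under the action
`ρ` of `G` by `k`-algebra automorphisms, corresponding to the character `c : G →* kˣ`. -/
def isotypic {k A G : Type*} [Field k] [Ring A] [Algebra k A] [Group G]
    (ρ : G →* (A ≃ₐ[k] A)) (c : G →* kˣ) : Submodule k A where
  carrier := {a | ∀ h : G, ρ h a = (c h : k) • a}
  add_mem' := fun {a} {b} ha hb h => by rw [map_add, ha h, hb h, smul_add]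
  zero_mem' := fun h => by rw [map_zero, smul_zero]
  smul_mem' := fun r a ha h => by rw [map_smul, ha h, smul_comm]

/-- Given an action `ρ` of a finite abelian group `G` on `A` by `k`-algebra automorphisms
and a fixed isomorphism `χ : G ≅ G^∨` of `G` with its character group, the `G`-grading of
`A` induced by the action: `A_g` is the isotypic component of the character `χ_{g⁻¹}`. -/
def actionGrading {k A G : Type*} [Field k] [Ring A] [Algebra k A] [Group G]
    (ρ : G →* (A ≃ₐ[k] A)) (χ : G ≃* (G →* kˣ)) : G → Submodule k A :=
  fun g => isotypic ρ (χ g⁻¹)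

/-- `f : A ≃ₗ[k] B` realises the `k`-algebra `B` as the cocycle twist `A^{G,μ}` of `A`,
with respect to the `G`-grading `ℬ` of `A` and the 2-cocycle `μ`:
`f` is a `k`-linear isomorphism with `f 1 = 1` and
`f a * f b = μ g h • f (a * b)` for all homogeneous `a ∈ A_g`, `b ∈ A_h`. -/
structure IsCocycleTwist (k : Type*) [Field k] {G : Type*} [Group G]
    {A : Type*} [Ring A] [Algebra k A] {B : Type*} [Ring B] [Algebra k B]
    (ℬ : G → Submodule k A) (μ : G → G → kˣ) (f : A ≃ₗ[k] B) : Prop where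
  map_one : f 1 = 1
  map_mul : ∀ (g h : G) (a b : A), a ∈ ℬ g → b ∈ ℬ h →
    f a * f b = (μ g h : k) • f (a * b)

/-- `ψ` realises the `k`-algebra `C` as the twisted group algebra `AG_μ = A ⊗_k kG_μ`:
`ψ g a` plays the role of `a ⊗ g`; the defining properties are `1 ⊗ e = 1`,
`(a ⊗ g)(b ⊗ h) = μ(g,h)·(ab ⊗ gh)`, and that `C = ⊕_{g ∈ G} A ⊗ g`. -/
structure IsTwistedGroupAlgebra (k : Type*) [Field k] {G : Type*} [Group G] [Fintype G]
    {A : Type*} [Ring A] [Algebra k A] {C : Type*} [Ring C] [Algebra k C]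
    (μ : G → G → kˣ) (ψ : G → (A →ₗ[k] C)) : Prop where
  map_one : ψ 1 1 = 1
  map_mul : ∀ (g h : G) (a b : A), ψ g a * ψ h b = (μ g h : k) • ψ (g * h) (a * b)
  bijective : Function.Bijective (fun v : G → A => ∑ g : G, ψ g (v g))

/-- The invariant subalgebra `C^G` of an action `σ` of `G` on `C`
by `k`-algebra automorphisms. -/
def fixedSubalgebra (k : Type*) [Field k] {G : Type*} [Group G]
    {C : Type*} [Ring C] [Algebra k C] (σ : G →* (C ≃ₐ[k] C)) : Subalgebra k C where
  carrier := {c | ∀ h : G, σ h c = c}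
  mul_mem' := fun {a} {b} ha hb h => by rw [map_mul, ha h, hb h]
  add_mem' := fun {a} {b} ha hb h => by rw [map_add, ha h, hb h]
  one_mem' := fun h => map_one (σ h)
  algebraMap_mem' := fun r h => AlgEquiv.commutes (σ h) r

set_option linter.unusedSectionVars false
section Aux

variable {k A G : Type*} [Field k] [Ring A] [Algebra k A]
    [CommGroup G] [Fintype G] [DecidableEq G]

/-- Orthogonality: a nontrivial character sums to zero. -/
lemma sum_char_eq_zero {c : G →* kˣ} (hc : c ≠ 1) :
    ∑ h : G, ((c h : kˣ) : k) = 0 := by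
  obtain ⟨h0, hh0⟩ : ∃ h0 : G, c h0 ≠ 1 := by
    by_contra hcon
    push_neg at hcon
    exact hc (MonoidHom.ext fun x => by simpa using hcon x)
  have key : ((c h0 : kˣ) : k) * ∑ h : G, ((c h : kˣ) : k) = ∑ h : G, ((c h : kˣ) : k) := by
    rw [Finset.mul_sum]
    exact Fintype.sum_equiv (Equiv.mulLeft h0) _ _ fun h => by
      simp [map_mul]
  have h2 : (((c h0 : kˣ) : k) - 1) * ∑ h : G, ((c h : kˣ) : k) = 0 := by
    rw [sub_mul, one_mul, key, sub_self]
  rcases mul_eq_zero.mp h2 with h3 | h3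
  · exact absurd (Units.ext (by rw [sub_eq_zero] at h3; simpa using h3)) hh0
  · exact h3

variable (ρ : G →* (A ≃ₐ[k] A)) (χ : G ≃* (G →* kˣ))

lemma chi_inv_apply (g l : G) : ((χ g⁻¹ l : kˣ) : k) = ((χ g l⁻¹ : kˣ) : k) := by
  rw [map_inv χ, MonoidHom.inv_apply, map_inv (χ g)]

lemma chi_mul_chi_inv (g l : G) : ((χ g l : kˣ) : k) * ((χ g⁻¹ l : kˣ) : k) = 1 := by
  rw [map_inv χ, MonoidHom.inv_apply, ← Units.val_mul, mul_inv_cancel, Units.val_one]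

lemma mem_actionGrading_iff {g : G} {a : A} :
    a ∈ actionGrading ρ χ g ↔ ∀ l : G, ρ l a = ((χ g⁻¹ l : kˣ) : k) • a := Iff.rfl

lemma one_mem_actionGrading : (1 : A) ∈ actionGrading ρ χ 1 := by
  intro l
  simp

lemma mul_mem_actionGrading {g h : G} {a b : A} (ha : a ∈ actionGrading ρ χ g)
    (hb : b ∈ actionGrading ρ χ h) : a * b ∈ actionGrading ρ χ (g * h) := by
  intro l
  rw [map_mul, ha l, hb l, smul_mul_smul_comm, mul_inv, map_mul, MonoidHom.mul_apply,
    Units.val_mul]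

/-- The projection onto the `g`-component of the grading. -/
noncomputable def projMap (g : G) : A →ₗ[k] A :=
  (Fintype.card G : k)⁻¹ • ∑ h : G, ((χ g h : kˣ) : k) • (ρ h).toLinearMap

lemma projMap_apply (g : G) (a : A) :
    projMap ρ χ g a = (Fintype.card G : k)⁻¹ • ∑ h : G, ((χ g h : kˣ) : k) • ρ h a := by
  simp [projMap, LinearMap.sum_apply]

lemma projMap_mem (g : G) (a : A) : projMap ρ χ g a ∈ actionGrading ρ χ g := by
  rw [mem_actionGrading_iff]
  intro l
  have step1 : ρ l (projMap ρ χ g a)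
      = (Fintype.card G : k)⁻¹ • ∑ h : G, ((χ g (l⁻¹ * h) : kˣ) : k) • ρ h a := by
    rw [projMap_apply, map_smul, map_sum]
    congr 1
    rw [show (∑ h : G, ρ l (((χ g h : kˣ) : k) • ρ h a))
        = ∑ h : G, ((χ g h : kˣ) : k) • ρ (l * h) a from
      Finset.sum_congr rfl fun h _ => by rw [map_smul, map_mul, AlgEquiv.mul_apply]]
    exact Fintype.sum_equiv (Equiv.mulLeft l) _ _ fun h => by simp
  have step2 : ((χ g⁻¹ l : kˣ) : k) • projMap ρ χ g a
      = (Fintype.card G : k)⁻¹ • ∑ h : G, ((χ g (l⁻¹ * h) : kˣ) : k) • ρ h a := by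
    rw [projMap_apply, smul_comm, Finset.smul_sum]
    congr 1
    refine Finset.sum_congr rfl fun h _ => ?_
    rw [smul_smul, map_mul (χ g), Units.val_mul, ← chi_inv_apply]
  rw [step1, step2]

lemma projMap_eq_of_mem {g' : G} {a : A} (g : G) (hchar : (Fintype.card G : k) ≠ 0)
    (ha : a ∈ actionGrading ρ χ g') :
    projMap ρ χ g a = if g = g' then a else 0 := by
  rw [mem_actionGrading_iff] at ha
  have : projMap ρ χ g a
      = (Fintype.card G : k)⁻¹ • (∑ h : G, ((χ (g * g'⁻¹) h : kˣ) : k)) • a := by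
    rw [projMap_apply]
    congr 1
    rw [Finset.sum_smul]
    refine Finset.sum_congr rfl fun h _ => ?_
    rw [ha h, smul_smul, map_mul χ, MonoidHom.mul_apply, Units.val_mul]
  rw [this]
  by_cases hgg : g = g'
  · subst hgg
    rw [if_pos rfl]
    simp only [mul_inv_cancel, map_one, MonoidHom.one_apply, Units.val_one]
    rw [Finset.sum_const, Finset.card_univ, nsmul_eq_mul, mul_one, smul_smul,
      inv_mul_cancel₀ hchar, one_smul]
  · rw [if_neg hgg]
    have hne : χ (g * g'⁻¹) ≠ 1 := by
      intro hcontra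
      apply hgg
      have := χ.injective (hcontra.trans (map_one χ).symm)
      rwa [mul_inv_eq_one] at this
    rw [sum_char_eq_zero hne, zero_smul, smul_zero]

lemma sum_projMap (hchar : (Fintype.card G : k) ≠ 0)
    (hnd : ∀ h : G, h ≠ 1 → ∃ g : G, χ g h ≠ 1) (a : A) :
    ∑ g : G, projMap ρ χ g a = a := by
  have hS : ∀ h : G, (∑ g : G, ((χ g h : kˣ) : k))
      = if h = 1 then (Fintype.card G : k) else 0 := by
    intro h
    by_cases hh : h = 1
    · subst hh
      simp [Finset.card_univ]
    · rw [if_neg hh]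
      obtain ⟨g0, hg0⟩ := hnd h hh
      have hcne : (χ.toMonoidHom.flip h) ≠ 1 := by
        intro hcontra
        exact hg0 (by simpa using DFunLike.congr_fun hcontra g0)
      simpa using sum_char_eq_zero (k := k) hcne
  calc ∑ g : G, projMap ρ χ g a
      = (Fintype.card G : k)⁻¹ • ∑ h : G, (∑ g : G, ((χ g h : kˣ) : k)) • ρ h a := by
        simp only [projMap_apply, ← Finset.smul_sum]
        rw [Finset.sum_comm]
        congr 1
        exact Finset.sum_congr rfl fun h _ => by rw [Finset.sum_smul]
    _ = a := by
        rw [show (∑ h : G, (∑ g : G, ((χ g h : kˣ) : k)) • ρ h a)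
            = ∑ h : G, (if h = 1 then (Fintype.card G : k) else 0) • ρ h a from
          Finset.sum_congr rfl fun h _ => by rw [hS h]]
        simp only [ite_smul, zero_smul]
        rw [Finset.sum_ite_eq' Finset.univ (1 : G) (fun h => (Fintype.card G : k) • ρ h a)]
        simp [smul_smul, inv_mul_cancel₀ hchar]

end Aux

/-- Under the standing hypotheses (`k` algebraically closed, `G` finite
abelian with `char k ∤ |G|` acting on `A` via `ρ` by algebra automorphisms, `χ : G ≅ G^∨`
fixed, `μ` a normalised 2-cocycle), let `B` be the cocycle twist `A^{G,μ}` (via `f`),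
let `C` be the twisted group algebra `AG_μ` (via `ψ`), and let `σ` be the diagonal action
of `G` on `AG_μ`, i.e. `(a ⊗ g)^h = χ_g(h)·(a^h ⊗ g)`. Then `A^{G,μ}` is isomorphic as a
`k`-algebra to the invariant ring `(AG_μ)^G`. -/
theorem statement2 {k A B C G : Type u} [Field k] [IsAlgClosed k] [Ring A] [Algebra k A]
    [Ring B] [Algebra k B] [Ring C] [Algebra k C]
    [CommGroup G] [Fintype G] [DecidableEq G]
    (hchar : (Fintype.card G : k) ≠ 0)
    (ρ : G →* (A ≃ₐ[k] A)) (χ : G ≃* (G →* kˣ))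
    (μ : G → G → kˣ) (hμ : IsCocycle μ)
    (f : A ≃ₗ[k] B) (hf : IsCocycleTwist k (actionGrading ρ χ) μ f)
    (ψ : G → (A →ₗ[k] C)) (hψ : IsTwistedGroupAlgebra k μ ψ)
    (σ : G →* (C ≃ₐ[k] C))
    (hσ : ∀ (h g : G) (a : A), σ h (ψ g a) = ((χ g h : kˣ) : k) • ψ g (ρ h a)) :
    Nonempty (B ≃ₐ[k] (fixedSubalgebra k σ)) := by
  classical
  -- nondegeneracy of the pairing
  have hnd : ∀ h : G, h ≠ 1 → ∃ g : G, χ g h ≠ 1 := by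
    intro h hh
    haveI : NeZero ((Monoid.exponent G : k)) := by
      refine ⟨fun h0 => hchar ?_⟩
      obtain ⟨m, hm⟩ := Group.exponent_dvd_card (G := G)
      rw [hm, Nat.cast_mul, h0, zero_mul]
    obtain ⟨φ, hφ⟩ := CommGroup.exists_apply_ne_one_of_hasEnoughRootsOfUnity G k hh
    exact ⟨χ.symm φ, by rw [MulEquiv.apply_symm_apply]; exact hφ⟩
  set Φ : A →ₗ[k] C := ∑ g : G, (ψ g).comp (projMap ρ χ g) with hΦdef
  have hΦ : ∀ a : A, Φ a = ∑ g : G, ψ g (projMap ρ χ g a) := by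
    intro a; rw [hΦdef]; simp [LinearMap.sum_apply]
  have hΦhom : ∀ (g : G) (a : A), a ∈ actionGrading ρ χ g → Φ a = ψ g a := by
    intro g a ha
    rw [hΦ]
    rw [show (∑ g' : G, ψ g' (projMap ρ χ g' a)) = ∑ g' : G, if g' = g then ψ g' a else 0 from
      Finset.sum_congr rfl fun g' _ => by
        rw [projMap_eq_of_mem ρ χ g' hchar ha, apply_ite (ψ g'), map_zero]]
    simp
  set LT : B →ₗ[k] C := Φ.comp f.symm.toLinearMap with hLTdef
  have hLT : ∀ x : B, LT x = Φ (f.symm x) := fun x => rfl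
  have hmul1 : ∀ a b : A, f a * f b
      = ∑ g : G, ∑ h : G, ((μ g h : kˣ) : k) • f (projMap ρ χ g a * projMap ρ χ h b) := by
    intro a b
    conv_lhs => rw [← sum_projMap ρ χ hchar hnd a, ← sum_projMap ρ χ hchar hnd b]
    rw [map_sum, map_sum, Finset.sum_mul_sum]
    exact Finset.sum_congr rfl fun g _ => Finset.sum_congr rfl fun h _ =>
      hf.map_mul g h _ _ (projMap_mem ρ χ g a) (projMap_mem ρ χ h b)
  have hLTone : LT 1 = 1 := by
    rw [hLT, show f.symm (1 : B) = (1 : A) from by rw [← hf.map_one, f.symm_apply_apply],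
      hΦhom 1 1 (one_mem_actionGrading ρ χ), hψ.map_one]
  have hLTmul : ∀ x y : B, LT (x * y) = LT x * LT y := by
    intro x y
    rw [hLT, hLT, hLT]
    have h2 : Φ (f.symm x) * Φ (f.symm y)
        = ∑ g : G, ∑ h : G, ((μ g h : kˣ) : k) •
            ψ (g * h) (projMap ρ χ g (f.symm x) * projMap ρ χ h (f.symm y)) := by
      rw [hΦ, hΦ, Finset.sum_mul_sum]
      exact Finset.sum_congr rfl fun g _ => Finset.sum_congr rfl fun h _ => hψ.map_mul g h _ _
    rw [h2]
    conv_lhs => rw [show x * y = f (f.symm x) * f (f.symm y) from by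
        rw [f.apply_symm_apply, f.apply_symm_apply],
      hmul1 (f.symm x) (f.symm y)]
    simp only [map_sum, map_smul, LinearEquiv.symm_apply_apply]
    exact Finset.sum_congr rfl fun g _ => Finset.sum_congr rfl fun h _ => by
      rw [hΦhom (g * h) _
        (mul_mem_actionGrading ρ χ (projMap_mem ρ χ g (f.symm x)) (projMap_mem ρ χ h (f.symm y)))]
  have hinv : ∀ x : B, LT x ∈ fixedSubalgebra k σ := by
    intro x l
    rw [hLT, hΦ, map_sum]
    refine Finset.sum_congr rfl fun g _ => ?_
    rw [hσ l g, projMap_mem ρ χ g (f.symm x) l, map_smul, smul_smul, chi_mul_chi_inv,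
      one_smul]
  have hΦinj : ∀ a : A, Φ a = 0 → a = 0 := by
    intro a ha
    have h0 : (fun g : G => projMap ρ χ g a) = (fun _ : G => (0 : A)) := by
      apply hψ.bijective.injective
      show (∑ g : G, ψ g (projMap ρ χ g a)) = ∑ g : G, ψ g 0
      rw [← hΦ a, ha]
      simp
    rw [← sum_projMap ρ χ hchar hnd a]
    exact Finset.sum_eq_zero fun g _ => congrFun h0 g
  let F : B →ₐ[k] C := AlgHom.ofLinearMap LT hLTone hLTmul
  let F' : B →ₐ[k] (fixedSubalgebra k σ) := F.codRestrict _ hinv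
  refine ⟨AlgEquiv.ofBijective F' ⟨?_, ?_⟩⟩
  · intro x y hxy
    have h1 : LT x = LT y := congrArg Subtype.val hxy
    have h2 : Φ (f.symm x - f.symm y) = 0 := by
      rw [map_sub, ← hLT, ← hLT, h1, sub_self]
    have h3 : f.symm x = f.symm y := by
      have := hΦinj _ h2
      rwa [sub_eq_zero] at this
    exact f.symm.injective h3
  · rintro ⟨c, hc⟩
    obtain ⟨v, hv⟩ := hψ.bijective.surjective c
    have hv' : (∑ g : G, ψ g (v g)) = c := hv
    have hvmem : ∀ g : G, v g ∈ actionGrading ρ χ g := by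
      intro g
      rw [mem_actionGrading_iff]
      intro l
      have heq : (fun g : G => ((χ g l : kˣ) : k) • ρ l (v g)) = v := by
        apply hψ.bijective.injective
        show (∑ g : G, ψ g (((χ g l : kˣ) : k) • ρ l (v g))) = ∑ g : G, ψ g (v g)
        calc (∑ g : G, ψ g (((χ g l : kˣ) : k) • ρ l (v g)))
            = σ l (∑ g : G, ψ g (v g)) := by
              rw [map_sum]
              exact (Finset.sum_congr rfl fun g _ => by rw [hσ l g, map_smul]).symm
          _ = ∑ g : G, ψ g (v g) := by rw [hv']; rw [hc l]
      have hg := congrFun heq g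
      have hkey := congrArg (fun w : A => ((χ g⁻¹ l : kˣ) : k) • w) hg
      simp only [smul_smul] at hkey
      rw [show ((χ g⁻¹ l : kˣ) : k) * ((χ g l : kˣ) : k) = 1 from by
        rw [mul_comm]; exact chi_mul_chi_inv χ g l, one_smul] at hkey
      exact hkey
    refine ⟨f (∑ g : G, v g), ?_⟩
    apply Subtype.ext
    show LT (f (∑ g : G, v g)) = c
    rw [hLT, f.symm_apply_apply, ← hv', hΦ]
    refine Finset.sum_congr rfl fun g' _ => ?_
    congr 1
    rw [map_sum]
    rw [show (∑ g : G, projMap ρ χ g' (v g)) = ∑ g : G, if g' = g then v g else 0 from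
      Finset.sum_congr rfl fun g _ => projMap_eq_of_mem ρ χ g' hchar (hvmem g)]
    simp
end

section
/- Let k be a field, G a finite group, A a G-graded k-algebra, and μ a normalised 2-cocycle of G with values in kˣ. Let a ∈ A_g be a homogeneous element. Then a is regular (i.e. neither a left nor a right zero-divisor) in A if and only if a is regular in the cocycle twist A_μ = (A, *_μ); and a is normal (i.e. aA = Aa) in A if and only if a is normal in A_μ. -/
universe u

open DirectSum in
private lemma exists_scaleEquiv5 {k A G : Type u} [Field k] [Ring A] [Algebra k A] [DecidableEq G]
    (ℬ : G → Submodule k A) (int : DirectSum.IsInternal ℬ) (c : G → kˣ) :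
    ∃ T : A ≃ₗ[k] A, ∀ (h : G) (x : A), x ∈ ℬ h → T x = (c h : k) • x := by
  let e : (⨁ (i : G), ℬ i) ≃ₗ[k] A := LinearEquiv.ofBijective (DirectSum.coeLinearMap ℬ) int
  let u : ∀ i, ℬ i ≃ₗ[k] ℬ i := fun i => LinearEquiv.smulOfUnit (c i)
  refine ⟨e.symm.trans ((DFinsupp.mapRange.linearEquiv u).trans e), ?_⟩
  intro h x hx
  have h1 : e (DirectSum.of (fun i => ℬ i) h ⟨x, hx⟩) = x :=
    DirectSum.coeLinearMap_of ℬ h ⟨x, hx⟩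
  have h2 : e.symm x = DirectSum.of (fun i => ℬ i) h ⟨x, hx⟩ :=
    e.symm_apply_eq.mpr h1.symm
  simp only [LinearEquiv.trans_apply, h2]
  have h3 : (DFinsupp.mapRange.linearEquiv u) ((DirectSum.of (fun i => ℬ i) h) ⟨x, hx⟩)
      = DirectSum.of (fun i => ℬ i) h (u h ⟨x, hx⟩) := by
    simp only [DirectSum.of, DFinsupp.mapRange.linearEquiv_apply, DFinsupp.singleAddHom_apply]
    exact DFinsupp.mapRange_single
  erw [h3]
  have h4 : (u h ⟨x, hx⟩ : ℬ h) = (c h : k) • (⟨x, hx⟩ : ℬ h) := rfl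
  rw [h4]
  have h5 : e (DirectSum.of (fun i => ℬ i) h ((c h : k) • (⟨x, hx⟩ : ℬ h)))
      = ((c h : k) • (⟨x, hx⟩ : ℬ h) : ℬ h) := DirectSum.coeLinearMap_of ℬ h _
  erw [h5]
  rfl

private lemma linearMap_ext_of_internal5 {k A G : Type u} [Field k] [Ring A] [Algebra k A]
    [DecidableEq G] (ℬ : G → Submodule k A) (int : DirectSum.IsInternal ℬ)
    {f f' : A →ₗ[k] A} (h : ∀ (i : G) (x : A), x ∈ ℬ i → f x = f' x) : f = f' := by
  ext b
  have hb : b ∈ (⊤ : Submodule k A) := trivial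
  rw [← int.submodule_iSup_eq_top] at hb
  induction hb using Submodule.iSup_induction' with
  | mem i x hx => exact h i x hx
  | zero => simp
  | add x _ y _ hx hy => simp [map_add, hx, hy]

/-- A `G`-grading of the `k`-algebra `A`: a direct sum decomposition of the underlying
`k`-vector space `A = ⊕ A_g` such that `1 ∈ A_e` and `A_g · A_h ⊆ A_{gh}`. -/
structure IsAlgGrading {k A G : Type*} [Field k] [Ring A] [Algebra k A]
    [Monoid G] [DecidableEq G] (ℬ : G → Submodule k A) : Prop where
  internal : DirectSum.IsInternal ℬ
  one_mem : (1 : A) ∈ ℬ 1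
  mul_mem : ∀ {g h : G} {a b : A}, a ∈ ℬ g → b ∈ ℬ h → a * b ∈ ℬ (g * h)

/-- A `G`-homogeneous element `a ∈ A_g` is regular (neither a left nor a
right zero-divisor) in `A` iff it is regular in the cocycle twist `A_μ` (whose multiplication
is `m`, with `m a b = μ g h • (a*b)` on homogeneous elements), and it is normal
(`aA = Aa`) in `A` iff it is normal in `A_μ`. -/
theorem statement5 {k A G : Type u} [Field k] [Ring A] [Algebra k A]
    [Group G] [Finite G] [DecidableEq G]
    (ℬ : G → Submodule k A) (hgr : IsAlgGrading ℬ)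
    (μ : G → G → kˣ) (hμ : IsCocycle μ)
    (m : A →ₗ[k] A →ₗ[k] A)
    (hm : ∀ (g h : G) (a b : A), a ∈ ℬ g → b ∈ ℬ h → m a b = (μ g h : k) • (a * b))
    (g : G) (a : A) (ha : a ∈ ℬ g) :
    (((∀ b : A, a * b = 0 → b = 0) ∧ (∀ b : A, b * a = 0 → b = 0)) ↔
      ((∀ b : A, m a b = 0 → b = 0) ∧ (∀ b : A, m b a = 0 → b = 0))) ∧
    ((Set.range (fun b : A => a * b) = Set.range (fun b : A => b * a)) ↔
      (Set.range (fun b : A => m a b) = Set.range (fun b : A => m b a))) := by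
  obtain ⟨int, -, -⟩ := hgr
  obtain ⟨T₁, hT₁⟩ := exists_scaleEquiv5 ℬ int (μ g)
  obtain ⟨T₂, hT₂⟩ := exists_scaleEquiv5 ℬ int (fun h => μ h g)
  have hL : ∀ b : A, m a b = a * T₁ b := by
    have : m a = (LinearMap.mulLeft k a).comp (T₁ : A →ₗ[k] A) :=
      linearMap_ext_of_internal5 ℬ int (fun i x hx => by
        simp [LinearMap.mulLeft_apply, hm g i a x ha hx, hT₁ i x hx, mul_smul_comm])
    intro b; rw [this]; rfl
  have hR : ∀ b : A, m b a = T₂ b * a := by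
    have : m.flip a = (LinearMap.mulRight k a).comp (T₂ : A →ₗ[k] A) :=
      linearMap_ext_of_internal5 ℬ int (fun i x hx => by
        simp only [LinearMap.flip_apply, LinearMap.comp_apply, LinearMap.mulRight_apply,
          LinearEquiv.coe_coe]
        rw [hm i g x a hx ha, hT₂ i x hx, smul_mul_assoc])
    intro b
    have := congrArg (fun f : A →ₗ[k] A => f b) this
    simpa using this
  constructor
  · constructor
    · rintro ⟨H1, H2⟩
      refine ⟨fun b hb => ?_, fun b hb => ?_⟩
      · rw [hL] at hb
        have := H1 _ hb
        simpa using T₁.map_eq_zero_iff.mp this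
      · rw [hR] at hb
        have := H2 _ hb
        simpa using T₂.map_eq_zero_iff.mp this
    · rintro ⟨H1, H2⟩
      refine ⟨fun b hb => ?_, fun b hb => ?_⟩
      · have : m a (T₁.symm b) = 0 := by rw [hL, T₁.apply_symm_apply]; exact hb
        have := H1 _ this
        have := congrArg T₁ this
        simpa using this
      · have : m (T₂.symm b) a = 0 := by rw [hR, T₂.apply_symm_apply]; exact hb
        have := H2 _ this
        have := congrArg T₂ this
        simpa using this
  · have e1 : Set.range (fun b : A => m a b) = Set.range (fun b : A => a * b) := by
      have : (fun b : A => m a b) = (fun b : A => a * b) ∘ T₁ := by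
        funext b; simp [hL b]
      rw [this, Set.range_comp, T₁.surjective.range_eq, Set.image_univ]
    have e2 : Set.range (fun b : A => m b a) = Set.range (fun b : A => b * a) := by
      have : (fun b : A => m b a) = (fun b : A => b * a) ∘ T₂ := by
        funext b; simp [hR b]
      rw [this, Set.range_comp, T₂.surjective.range_eq, Set.image_univ]
    rw [e1, e2]
end

section
/- Let k be an algebraically closed field, G a finite abelian group with char(k) ∤ |G| acting on a k-algebra A by algebra automorphisms (with a fixed isomorphism G ≅ G^∨, g ↦ χ_g), and μ a normalised 2-cocycle of G with values in kˣ. Identify A^{G,μ} with the invariant ring (AG_μ)^G and let AG_μ = ⊕_{g∈G} M^{χ_g} be the isotypic decomposition of AG_μ under the diagonal G-action. Then: (i) each M^{χ_g} is an (A^{G,μ}, A^{G,μ})-sub-bimodule of AG_μ which is free of rank 1 as a left A^{G,μ}-module and as a right A^{G,μ}-module, with generator 1 ⊗ g; (ii) as an (A^{G,μ}, A^{G,μ})-bimodule, AG_μ ≅ ⊕_{g∈G} {}^{id}(A^{G,μ})^{φ_g} for some k-algebra automorphisms φ_g of A^{G,μ} with φ_e = id; (iii) consequently AG_μ is a faithfully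 flat extension of A^{G,μ} on both the left and the right; and (iv) AG_μ is free of rank |G| as a left and as a right A-module, hence faithfully flat over A on both sides. -/
/-!
Each `1 ⊗ g = ψ g 1` is a unit of `AG_μ` lying in the isotypic component `M^{χ_g}`, so
multiplication by it on either side identifies the invariants `M^{χ_e}` with `M^{χ_g}`, and
conjugation by it restricts to the automorphism `φ_g` of the invariants. The components exhaust
`AG_μ` because `|G|` is invertible in `k`: the averaging operators `|G|⁻¹ ∑ₕ χ_g(h⁻¹) σₕ` project
onto them and, by orthogonality of the characters `χ_g`, sum to the identity. Freeness over `A`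
is the factorisation `a ⊗ g = (a ⊗ e)(1 ⊗ g) = (1 ⊗ g)(a ⊗ e)`.
-/

universe u v

open Function
open scoped DirectSum

section Characters

variable {k G : Type*} [Field k] [Group G] [Fintype G]

theorem sum_coe_units_hom_eq_zero {c : G →* kˣ} (hc : c ≠ 1) : ∑ g, (c g : k) = 0 :=
  sum_hom_units_eq_zero ((Units.coeHom k).comp c) fun h => hc <| by
    ext g
    exact DFunLike.congr_fun h g

/-- The characters `χ g` separate the points of `G`: they are `|G|` linearly independent
functions on `G`, hence span all of `G → k`, and in particular the indicator of `1`. -/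
theorem MulEquiv.eq_one_of_forall_apply_eq_one (χ : G ≃* (G →* kˣ)) {x : G}
    (hx : ∀ g, χ g x = 1) : x = 1 := by
  classical
  let v : G → G → k := fun g => (Units.coeHom k).comp (χ g)
  have hv : LinearIndependent k v :=
    (linearIndependent_monoidHom G k).comp _ fun g g' h => χ.injective <| by
      ext y; exact DFunLike.congr_fun h y
  have hspan : Submodule.span k (Set.range v) = ⊤ :=
    hv.span_eq_top_of_card_eq_finrank' (by simp)
  let ev : G → (G → k) →ₗ[k] k := LinearMap.proj (R := k) (φ := fun _ => k)
  have hℓ : ev 1 - ev x = 0 := LinearMap.ext_on_range hspan fun g => by simp [ev, v, hx g]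
  by_contra hx1
  simpa [ev, Pi.single_apply, hx1] using LinearMap.congr_fun hℓ (Pi.single 1 1)

theorem MulEquiv.sum_apply_eq_zero (χ : G ≃* (G →* kˣ)) {x : G} (hx : x ≠ 1) :
    ∑ g, (χ g x : k) = 0 :=
  sum_coe_units_hom_eq_zero (c := (MonoidHom.eval x).comp χ.toMonoidHom) fun h =>
    hx <| χ.eq_one_of_forall_apply_eq_one fun g => DFunLike.congr_fun h g

end Characters

theorem DirectSum.isInternal_iff_bijective_sum {ι R M : Type*} [DecidableEq ι] [Fintype ι]
    [Semiring R] [AddCommMonoid M] [Module R M] (P : ι → Submodule R M) :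
    IsInternal P ↔ Bijective (fun x : (i : ι) → P i => ∑ i, (x i : M)) := by
  classical
  have h : (fun x : (i : ι) → P i => ∑ i, (x i : M)) =
      (DirectSum.coeAddMonoidHom P : (⨁ i, P i) → M) ∘ DFinsupp.equivFunOnFintype.symm := by
    ext x
    conv_rhs => rw [comp_apply, ← sum_univ_of (DFinsupp.equivFunOnFintype.symm x)]
    simp only [map_sum, coeAddMonoidHom_of]
    rfl
  rw [h, Bijective.of_comp_iff _ DFinsupp.equivFunOnFintype.symm.bijective]
  rfl

section Isotypic

variable {k C G : Type*} [Field k] [Ring C] [Algebra k C] [Group G]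
  (σ : G →* (C ≃ₐ[k] C))

theorem mul_mem_isotypic {c d : G →* kˣ} {m n : C} (hm : m ∈ isotypic σ c)
    (hn : n ∈ isotypic σ d) : m * n ∈ isotypic σ (c * d) := fun h => by
  rw [map_mul, hm h, hn h, smul_mul_smul_comm, MonoidHom.mul_apply, Units.val_mul]

theorem fixed_mul_mem_isotypic {c : G →* kˣ} {b m : C} (hb : b ∈ fixedSubalgebra k σ)
    (hm : m ∈ isotypic σ c) : b * m ∈ isotypic σ c := fun h => by
  rw [map_mul, hb h, hm h, mul_smul_comm]

theorem mul_fixed_mem_isotypic {c : G →* kˣ} {m b : C} (hm : m ∈ isotypic σ c)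
    (hb : b ∈ fixedSubalgebra k σ) : m * b ∈ isotypic σ c := fun h => by
  rw [map_mul, hb h, hm h, smul_mul_assoc]

theorem mem_isotypic_one_iff {m : C} : m ∈ isotypic σ 1 ↔ m ∈ fixedSubalgebra k σ := by
  simp [isotypic, fixedSubalgebra]

theorem Units.inv_mem_isotypic {c : G →* kˣ} {u : Cˣ} (hu : (u : C) ∈ isotypic σ c) :
    ((u⁻¹ : Cˣ) : C) ∈ isotypic σ c⁻¹ := fun h =>
  left_inv_eq_right_inv (a := σ h u) (by rw [← map_mul, u.inv_mul, map_one]) <| by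
    rw [hu h, smul_mul_smul_comm, MonoidHom.inv_apply, u.mul_inv, ← Units.val_mul,
      mul_inv_cancel, Units.val_one, one_smul]

variable [Fintype G]

noncomputable def isotypicProj (c : G →* kˣ) : C →ₗ[k] C :=
  (Fintype.card G : k)⁻¹ • ∑ h, (c h⁻¹ : k) • (σ h).toLinearMap

theorem isotypicProj_apply (c : G →* kˣ) (m : C) :
    isotypicProj σ c m = (Fintype.card G : k)⁻¹ • ∑ h, (c h⁻¹ : k) • σ h m := by
  simp [isotypicProj]

theorem isotypicProj_mem (c : G →* kˣ) (m : C) : isotypicProj σ c m ∈ isotypic σ c := by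
  intro h'
  have hshift : ∑ h, (c h⁻¹ : k) • σ h' (σ h m) = (c h' : k) • ∑ h, (c h⁻¹ : k) • σ h m := by
    rw [Finset.smul_sum]
    refine Fintype.sum_bijective (h' * ·) (Group.mulLeft_bijective h') _ _ fun h => ?_
    rw [smul_smul, ← Units.val_mul, ← map_mul, mul_inv_rev, map_mul, map_mul, mul_left_comm,
      ← map_mul c h', mul_inv_cancel, map_one, mul_one, map_mul σ]
    rfl
  rw [isotypicProj_apply, map_smul, map_sum]
  simp only [map_smul]
  rw [hshift, smul_comm]

theorem isotypicProj_of_mem [DecidableEq (G →* kˣ)] (hcard : (Fintype.card G : k) ≠ 0)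
    {c d : G →* kˣ} {m : C} (hm : m ∈ isotypic σ d) :
    isotypicProj σ c m = if d = c then m else 0 := by
  have hterm : ∀ h, (c h⁻¹ : k) • σ h m = ((c⁻¹ * d) h : k) • m := fun h => by
    rw [hm h, smul_smul, MonoidHom.mul_apply, MonoidHom.inv_apply, map_inv, Units.val_mul]
  rw [isotypicProj_apply, Finset.sum_congr rfl fun h _ => hterm h, ← Finset.sum_smul]
  split_ifs with hdc
  · simp [hdc, hcard]
  · rw [sum_coe_units_hom_eq_zero fun h => hdc (inv_mul_eq_one.1 h).symm, zero_smul, smul_zero]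

theorem sum_isotypicProj (χ : G ≃* (G →* kˣ)) (hcard : (Fintype.card G : k) ≠ 0) (m : C) :
    ∑ g, isotypicProj σ (χ g) m = m := by
  classical
  have horth : ∀ h, (∑ g, (χ g h⁻¹ : k)) • σ h m =
      if h = 1 then (Fintype.card G : k) • m else 0 := fun h => by
    split_ifs with h1
    · simp [h1]
    · rw [χ.sum_apply_eq_zero (inv_ne_one.2 h1), zero_smul]
  simp only [isotypicProj_apply, ← Finset.smul_sum]
  rw [Finset.sum_comm]
  simp only [← Finset.sum_smul, horth, Finset.sum_ite_eq', Finset.mem_univ, if_true, smul_smul,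
    inv_mul_cancel₀ hcard, one_smul]

theorem isInternal_isotypic [DecidableEq G] (χ : G ≃* (G →* kˣ))
    (hcard : (Fintype.card G : k) ≠ 0) : DirectSum.IsInternal fun g => isotypic σ (χ g) := by
  classical
  rw [DirectSum.isInternal_iff_bijective_sum, bijective_iff_has_inverse]
  refine ⟨fun m g => ⟨isotypicProj σ (χ g) m, isotypicProj_mem σ _ m⟩, fun x => ?_,
    sum_isotypicProj σ χ hcard⟩
  funext g
  ext
  simp [map_sum, isotypicProj_of_mem σ hcard (x _).2, χ.injective.eq_iff]

end Isotypic

section HomogeneousUnit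

variable {k C G : Type*} [Field k] [Ring C] [Algebra k C] [Group G]
  (σ : G →* (C ≃ₐ[k] C)) {c : G →* kˣ} {u : Cˣ}

theorem existsUnique_mul_unit_eq (hu : (u : C) ∈ isotypic σ c) {m : C}
    (hm : m ∈ isotypic σ c) : ∃! b : fixedSubalgebra k σ, (b : C) * u = m := by
  have hb : m * ((u⁻¹ : Cˣ) : C) ∈ fixedSubalgebra k σ := by
    rw [← mem_isotypic_one_iff, ← mul_inv_cancel c]
    exact mul_mem_isotypic σ hm (u.inv_mem_isotypic σ hu)
  exact ⟨⟨_, hb⟩, u.inv_mul_cancel_right m, fun b hb' => Subtype.ext <| by simp [← hb']⟩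

theorem existsUnique_unit_mul_eq (hu : (u : C) ∈ isotypic σ c) {m : C}
    (hm : m ∈ isotypic σ c) : ∃! b : fixedSubalgebra k σ, (u : C) * b = m := by
  have hb : ((u⁻¹ : Cˣ) : C) * m ∈ fixedSubalgebra k σ := by
    rw [← mem_isotypic_one_iff, ← inv_mul_cancel c]
    exact mul_mem_isotypic σ (u.inv_mem_isotypic σ hu) hm
  exact ⟨⟨_, hb⟩, u.mul_inv_cancel_left m, fun b hb' => Subtype.ext <| by simp [← hb']⟩

theorem conj_mem_fixedSubalgebra (hu : (u : C) ∈ isotypic σ c) {s : C}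
    (hs : s ∈ fixedSubalgebra k σ) : (u : C) * s * ((u⁻¹ : Cˣ) : C) ∈ fixedSubalgebra k σ := by
  rw [← mem_isotypic_one_iff, ← mul_inv_cancel c]
  exact mul_mem_isotypic σ (mul_fixed_mem_isotypic σ hu hs) (u.inv_mem_isotypic σ hu)

theorem map_conj_fixedSubalgebra (hu : (u : C) ∈ isotypic σ c) :
    (fixedSubalgebra k σ).map
      (MulSemiringAction.toAlgEquiv k C (ConjAct.toConjAct u) : C →ₐ[k] C) =
    fixedSubalgebra k σ := by
  refine le_antisymm ?_ fun s hs => ?_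
  · rintro _ ⟨s, hs, rfl⟩
    exact conj_mem_fixedSubalgebra σ hu hs
  · refine ⟨_, conj_mem_fixedSubalgebra σ (u.inv_mem_isotypic σ hu) hs, ?_⟩
    simp [ConjAct.units_smul_def, mul_assoc]

noncomputable def conjFixedSubalgebra (hu : (u : C) ∈ isotypic σ c) :
    fixedSubalgebra k σ ≃ₐ[k] fixedSubalgebra k σ :=
  ((MulSemiringAction.toAlgEquiv k C (ConjAct.toConjAct u)).subalgebraMap _).trans
    (Subalgebra.equivOfEq _ _ (map_conj_fixedSubalgebra σ hu))

theorem coe_conjFixedSubalgebra (hu : (u : C) ∈ isotypic σ c) (s : fixedSubalgebra k σ) :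
    (conjFixedSubalgebra σ hu s : C) = u * s * ((u⁻¹ : Cˣ) : C) :=
  rfl

theorem unit_mul_eq_conjFixedSubalgebra_mul (hu : (u : C) ∈ isotypic σ c)
    (s : fixedSubalgebra k σ) : (u : C) * s = conjFixedSubalgebra σ hu s * u := by
  rw [coe_conjFixedSubalgebra, u.inv_mul_cancel_right]

theorem conjFixedSubalgebra_eq_refl (hu : (u : C) ∈ isotypic σ c) (hu1 : u = 1) :
    conjFixedSubalgebra σ hu = AlgEquiv.refl := by
  ext s
  simp [coe_conjFixedSubalgebra, hu1]

end HomogeneousUnit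

theorem DirectSum.IsInternal.bijective_sum_of_existsUnique {ι R M N : Type*} [DecidableEq ι]
    [Fintype ι] [Semiring R] [AddCommMonoid M] [Module R M] {P : ι → Submodule R M}
    (hP : IsInternal P) (f : ι → N → M) (hf : ∀ i n, f i n ∈ P i)
    (hf' : ∀ i, ∀ m ∈ P i, ∃! n, f i n = m) : Bijective fun v : ι → N => ∑ i, f i (v i) := by
  have hcomp : ∀ i, Bijective fun n : N => (⟨f i n, hf i n⟩ : P i) := fun i =>
    ⟨fun n n' h => (hf' i _ (hf i n)).unique rfl (congrArg Subtype.val h).symm,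
      fun m => (hf' i m m.2).exists.imp fun n hn => Subtype.ext hn⟩
  exact ((isInternal_iff_bijective_sum P).1 hP).comp (Bijective.piMap hcomp)

theorem IsCocycle.apply_inv_self {G k : Type*} [Group G] [Field k] {μ : G → G → kˣ}
    (hμ : IsCocycle μ) (g : G) : μ g g⁻¹ = μ g⁻¹ g := by
  simpa [hμ.2.1, hμ.2.2] using hμ.1 g g⁻¹ g

namespace IsTwistedGroupAlgebra

variable {k A C G : Type*} [Field k] [Ring A] [Algebra k A] [Ring C] [Algebra k C] [Group G]
  [Fintype G] {μ : G → G → kˣ} {ψ : G → A →ₗ[k] C}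

theorem isUnit_apply_one (hψ : IsTwistedGroupAlgebra k μ ψ) (hμ : IsCocycle μ) (g : G) :
    IsUnit (ψ g 1) := by
  refine ⟨⟨ψ g 1, ((μ g g⁻¹ : kˣ) : k)⁻¹ • ψ g⁻¹ 1, ?_, ?_⟩, rfl⟩
  · rw [mul_smul_comm, hψ.map_mul, smul_smul, inv_mul_cancel₀ (Units.ne_zero _), one_smul,
      mul_inv_cancel, one_mul, hψ.map_one]
  · rw [smul_mul_assoc, hψ.map_mul, smul_smul, hμ.apply_inv_self,
      inv_mul_cancel₀ (Units.ne_zero _), one_smul, inv_mul_cancel, one_mul, hψ.map_one]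

theorem apply_eq_one_apply_mul (hψ : IsTwistedGroupAlgebra k μ ψ) (hμ : IsCocycle μ) (g : G)
    (a : A) : ψ g a = ψ 1 a * ψ g 1 := by
  rw [hψ.map_mul, hμ.2.1, one_mul, mul_one, Units.val_one, one_smul]

theorem apply_eq_apply_one_mul (hψ : IsTwistedGroupAlgebra k μ ψ) (hμ : IsCocycle μ) (g : G)
    (a : A) : ψ g a = ψ g 1 * ψ 1 a := by
  rw [hψ.map_mul, hμ.2.2, mul_one, one_mul, Units.val_one, one_smul]

end IsTwistedGroupAlgebra

theorem statement10_general {k A C G : Type u} [Field k] [Ring A] [Algebra k A]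
    [Ring C] [Algebra k C] [CommGroup G] [Fintype G] [DecidableEq G]
    (hchar : (Fintype.card G : k) ≠ 0)
    (ρ : G →* (A ≃ₐ[k] A)) (χ : G ≃* (G →* kˣ))
    (μ : G → G → kˣ) (hμ : IsCocycle μ)
    (ψ : G → (A →ₗ[k] C)) (hψ : IsTwistedGroupAlgebra k μ ψ)
    (σ : G →* (C ≃ₐ[k] C))
    (hσ : ∀ (h g : G) (a : A), σ h (ψ g a) = ((χ g h : kˣ) : k) • ψ g (ρ h a)) :
    -- (i)
    (∀ g : G,
      (∀ b ∈ fixedSubalgebra k σ, ∀ m ∈ isotypic σ (χ g), b * m ∈ isotypic σ (χ g) ∧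
        m * b ∈ isotypic σ (χ g)) ∧
      (ψ g 1 ∈ isotypic σ (χ g)) ∧
      (∀ m ∈ isotypic σ (χ g), ∃! b : fixedSubalgebra k σ, (b : C) * ψ g 1 = m) ∧
      (∀ m ∈ isotypic σ (χ g), ∃! b : fixedSubalgebra k σ, ψ g 1 * (b : C) = m)) ∧
    -- (ii)
    (DirectSum.IsInternal (fun g : G => isotypic σ (χ g)) ∧
      ∃ φ : G → (fixedSubalgebra k σ ≃ₐ[k] fixedSubalgebra k σ),
        φ 1 = AlgEquiv.refl ∧
        ∀ (g : G) (s : fixedSubalgebra k σ), ψ g 1 * (s : C) = ((φ g s : fixedSubalgebra k σ) : C) * ψ g 1) ∧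
    -- (iii)
    (Function.Bijective (fun v : G → fixedSubalgebra k σ => ∑ g : G, ((v g : C) * ψ g 1)) ∧
      Function.Bijective (fun v : G → fixedSubalgebra k σ => ∑ g : G, (ψ g 1 * (v g : C)))) ∧
    -- (iv)
    (Function.Bijective (fun v : G → A => ∑ g : G, (ψ 1 (v g) * ψ g 1)) ∧
      Function.Bijective (fun v : G → A => ∑ g : G, (ψ g 1 * ψ 1 (v g)))) := by
  let u : G → Cˣ := fun g => (hψ.isUnit_apply_one hμ g).unit
  have hu : ∀ g, (u g : C) ∈ isotypic σ (χ g) := fun g h => by rw [IsUnit.unit_spec, hσ, map_one]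
  have hmul_left : ∀ g, ∀ m ∈ isotypic σ (χ g), ∃! b : fixedSubalgebra k σ, (b : C) * ψ g 1 = m :=
    fun g _ => existsUnique_mul_unit_eq σ (hu g)
  have hmul_right : ∀ g, ∀ m ∈ isotypic σ (χ g), ∃! b : fixedSubalgebra k σ, ψ g 1 * b = m :=
    fun g _ => existsUnique_unit_mul_eq σ (hu g)
  have hint := isInternal_isotypic σ χ hchar
  refine ⟨fun g => ⟨fun b hb m hm => ⟨?_, ?_⟩, hu g, hmul_left g, hmul_right g⟩,
    ⟨hint, fun g => conjFixedSubalgebra σ (hu g),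
      conjFixedSubalgebra_eq_refl σ _ (Units.ext hψ.map_one),
      fun g => unit_mul_eq_conjFixedSubalgebra_mul σ (hu g)⟩,
    ⟨hint.bijective_sum_of_existsUnique _ (fun g b => ?_) hmul_left,
      hint.bijective_sum_of_existsUnique _ (fun g b => ?_) hmul_right⟩, ?_, ?_⟩
  · exact fixed_mul_mem_isotypic σ hb hm
  · exact mul_fixed_mem_isotypic σ hm hb
  · exact fixed_mul_mem_isotypic σ b.2 (hu g)
  · exact mul_fixed_mem_isotypic σ (hu g) b.2
  · simpa only [← hψ.apply_eq_one_apply_mul hμ] using hψ.bijective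
  · simpa only [← hψ.apply_eq_apply_one_mul hμ] using hψ.bijective

/-- Under the standing hypotheses, identify `A^{G,μ}` with the invariant
ring `B := (AG_μ)^G` of the twisted group algebra `C := AG_μ` (given via `ψ`) under the
diagonal `G`-action `σ`, and let `M^{χ_g} := isotypic σ (χ g)` be the isotypic components
of `AG_μ`. Then:
(i) each `M^{χ_g}` is an `(A^{G,μ}, A^{G,μ})`-sub-bimodule of `AG_μ`, free of rank 1 with
generator `1 ⊗ g = ψ g 1` as a left and as a right `A^{G,μ}`-module;
(ii) `AG_μ = ⊕_g M^{χ_g}` and there are `k`-algebra automorphisms `φ_g` of `A^{G,μ}` with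
`φ_e = id` and `(1 ⊗ g)·s = φ_g(s)·(1 ⊗ g)`, so that `M^{χ_g} ≅ ^{id}(A^{G,μ})^{φ_g}` and
`AG_μ ≅ ⊕_g ^{id}(A^{G,μ})^{φ_g}` as `(A^{G,μ}, A^{G,μ})`-bimodules;
(iii) `AG_μ` is free (with basis `(1 ⊗ g)_{g ∈ G}`) as a left and as a right
`A^{G,μ}`-module, hence a faithfully flat extension of `A^{G,μ}` on both sides;
(iv) `AG_μ` is free of rank `|G|` (with basis `(1 ⊗ g)_{g ∈ G}`) as a left and as a right
`A`-module, hence faithfully flat over `A` on both sides. -/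
theorem statement10 {k A C G : Type u} [Field k] [IsAlgClosed k] [Ring A] [Algebra k A]
    [Ring C] [Algebra k C] [CommGroup G] [Fintype G] [DecidableEq G]
    (hchar : (Fintype.card G : k) ≠ 0)
    (ρ : G →* (A ≃ₐ[k] A)) (χ : G ≃* (G →* kˣ))
    (μ : G → G → kˣ) (hμ : IsCocycle μ)
    (ψ : G → (A →ₗ[k] C)) (hψ : IsTwistedGroupAlgebra k μ ψ)
    (σ : G →* (C ≃ₐ[k] C))
    (hσ : ∀ (h g : G) (a : A), σ h (ψ g a) = ((χ g h : kˣ) : k) • ψ g (ρ h a)) :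
    -- (i)
    (∀ g : G,
      (∀ b ∈ fixedSubalgebra k σ, ∀ m ∈ isotypic σ (χ g), b * m ∈ isotypic σ (χ g) ∧
        m * b ∈ isotypic σ (χ g)) ∧
      (ψ g 1 ∈ isotypic σ (χ g)) ∧
      (∀ m ∈ isotypic σ (χ g), ∃! b : fixedSubalgebra k σ, (b : C) * ψ g 1 = m) ∧
      (∀ m ∈ isotypic σ (χ g), ∃! b : fixedSubalgebra k σ, ψ g 1 * (b : C) = m)) ∧
    -- (ii)
    (DirectSum.IsInternal (fun g : G => isotypic σ (χ g)) ∧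
      ∃ φ : G → (fixedSubalgebra k σ ≃ₐ[k] fixedSubalgebra k σ),
        φ 1 = AlgEquiv.refl ∧
        ∀ (g : G) (s : fixedSubalgebra k σ), ψ g 1 * (s : C) = ((φ g s : fixedSubalgebra k σ) : C) * ψ g 1) ∧
    -- (iii)
    (Function.Bijective (fun v : G → fixedSubalgebra k σ => ∑ g : G, ((v g : C) * ψ g 1)) ∧
      Function.Bijective (fun v : G → fixedSubalgebra k σ => ∑ g : G, (ψ g 1 * (v g : C)))) ∧
    -- (iv)
    (Function.Bijective (fun v : G → A => ∑ g : G, (ψ 1 (v g) * ψ g 1)) ∧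
      Function.Bijective (fun v : G → A => ∑ g : G, (ψ g 1 * ψ 1 (v g)))) :=
  statement10_general hchar ρ χ μ hμ ψ hψ σ hσ
end
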